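/- arXiv:2011.06695 — 3 statements merged into one kernel-verified Lean document; each statement's English description precedes it below -/
import Mathlib

section
/- There exist finite probability distributions and functions π(x) > 0, v(x) > 0, τ(x) > 0, and c(x) ∈ {−1,1} such that the weighted average Σ_x c(x)·π(x)·v(x)·τ(x)·p(x) / Σ_x c(x)·π(x)·v(x)·p(x) is negative even though τ(x) > 0 for all x. (Negative IV weights under weak monotonicity can destroy causal interpretability.) -/
/-- there exist a finite probability distribution and functions
`π > 0`, `v > 0`, `τ > 0`, `c ∈ {-1, 1}` such that the weighted average
`Σ c·π·v·τ·p / Σ c·π·v·p` is negative even though every `τ(x)` is positive. -/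
theorem stmt3 : ∃ (n : ℕ) (p π v τ c : Fin n → ℝ),
    (∀ i, 0 < p i) ∧ (∑ i, p i = 1) ∧
    (∀ i, 0 < π i) ∧ (∀ i, 0 < v i) ∧ (∀ i, 0 < τ i) ∧
    (∀ i, c i = 1 ∨ c i = -1) ∧
    (∑ i, c i * π i * v i * τ i * p i) / (∑ i, c i * π i * v i * p i) < 0 :=
  -- Equally likely compliers (`π = 2`, `τ = 1`) and defiers (`π = 1`, `τ = 3`): the compliers
  -- dominate the denominator, `(2 - 1) / 2 > 0`, the defiers the numerator, `(2 - 3) / 2 < 0`.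
  ⟨2, ![1/2, 1/2], ![2, 1], ![1, 1], ![1, 3], ![1, -1], by
    norm_num [Fin.forall_fin_two, Fin.sum_univ_two]⟩
end

section
/- Suppose T is binary with E[T | X] = X·α linear in X, and let ξ be the coefficient on T in the L² linear projection of R on (T, X) (X including a constant). Then ξ = E[Var[T | X] · ξ(X)] / E[Var[T | X]], where ξ(X) = E[R | T=1, X] − E[R | T=0, X]. (Angrist 1998 regression weighting lemma.) -/
open Finset

section Defs

variable {Ω 𝓧 : Type*} [Fintype Ω]

/-- Expectation of `f` under weights `p` on a finite outcome space. -/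
noncomputable def pexp (p : Ω → ℝ) (f : Ω → ℝ) : ℝ := ∑ ω, p ω * f ω

open Classical in
/-- Probability of the event `A` under weights `p`. -/
noncomputable def pprob (p : Ω → ℝ) (A : Ω → Prop) : ℝ := ∑ ω, if A ω then p ω else 0

open Classical in
/-- Conditional expectation of `f` given the event `A`. -/
noncomputable def eexp (p : Ω → ℝ) (A : Ω → Prop) (f : Ω → ℝ) : ℝ :=
  (∑ ω, if A ω then p ω * f ω else 0) / pprob p A

/-- Conditional probability of `A` given `B`. -/
noncomputable def cprob (p : Ω → ℝ) (A B : Ω → Prop) : ℝ :=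
  pprob p (fun ω => A ω ∧ B ω) / pprob p B

/-- `p` is a probability vector. -/
def IsProb (p : Ω → ℝ) : Prop := (∀ ω, 0 ≤ p ω) ∧ ∑ ω, p ω = 1

/-- Conditional expectation of `f` given `X = x`. -/
noncomputable def condMean (p : Ω → ℝ) (X : Ω → 𝓧) (f : Ω → ℝ) (x : 𝓧) : ℝ :=
  eexp p (fun ω => X ω = x) f

/-- Conditional expectation of `f` given `X = x` and `Z = z`. -/
noncomputable def condMeanOn (p : Ω → ℝ) (X : Ω → 𝓧) (Z : Ω → ℝ) (f : Ω → ℝ) (x : 𝓧) (z : ℝ) : ℝ :=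
  eexp p (fun ω => X ω = x ∧ Z ω = z) f

/-- Conditional cslope coefficient `E[f | Z=1, X=x] - E[f | Z=0, X=x]`. -/
noncomputable def cslope (p : Ω → ℝ) (X : Ω → 𝓧) (Z : Ω → ℝ) (f : Ω → ℝ) (x : 𝓧) : ℝ :=
  condMeanOn p X Z f x 1 - condMeanOn p X Z f x 0

/-- Conditional variance of `f` given the event `A`. -/
noncomputable def evVar (p : Ω → ℝ) (A : Ω → Prop) (f : Ω → ℝ) : ℝ :=
  eexp p A (fun ω => (f ω - eexp p A f) ^ 2)

/-- Conditional variance of `f` given `X = x`. -/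
noncomputable def condVar (p : Ω → ℝ) (X : Ω → 𝓧) (f : Ω → ℝ) (x : 𝓧) : ℝ :=
  evVar p (fun ω => X ω = x) f

end Defs

/-! Write `m(X) = E[T | X]`. The normal equations of the projection make the residual
`R - b T - X·g` orthogonal to `T` and to `X·α = m(X)`, hence to `T - m(X)`. Since `T - m(X)` is
orthogonal to every function of `X`, this leaves `E[R (T - m(X))] = b E[T (T - m(X))]`. For binary
`T`, `E[T (T - m(X))] = E[m(1 - m)]`, and splitting `E[R | X]` along `T = 1` and `T = 0` gives
`E[R (T - m(X))] = E[m(1 - m) ξ(X)]`. -/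

section Expectation

variable {Ω : Type*} [Fintype Ω] (p : Ω → ℝ)

lemma pexp_sub (f g : Ω → ℝ) : pexp p (fun ω => f ω - g ω) = pexp p f - pexp p g := by
  simp only [pexp, mul_sub, sum_sub_distrib]

lemma pexp_const_mul (c : ℝ) (f : Ω → ℝ) : pexp p (fun ω => c * f ω) = c * pexp p f := by
  simp only [pexp, mul_sum, mul_left_comm]

lemma pexp_congr_of_ne_zero {f g : Ω → ℝ} (h : ∀ ω, p ω ≠ 0 → f ω = g ω) :
    pexp p f = pexp p g :=
  sum_congr rfl fun ω _ => by
    by_cases hω : p ω = 0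
    · simp [hω]
    · rw [h ω hω]

lemma pexp_mul_eq_zero_of_forall_le {q u : Ω → ℝ}
    (h : ∀ t : ℝ, pexp p (fun ω => q ω ^ 2) ≤ pexp p (fun ω => (q ω - t * u ω) ^ 2)) :
    pexp p (fun ω => q ω * u ω) = 0 := by
  have hquad : ∀ t : ℝ, 0 ≤ pexp p (fun ω => u ω ^ 2) * (t * t) +
      (-2 * pexp p (fun ω => q ω * u ω)) * t + 0 := by
    intro t
    have hexpand : pexp p (fun ω => (q ω - t * u ω) ^ 2) = pexp p (fun ω => q ω ^ 2) +
        (pexp p (fun ω => u ω ^ 2) * (t * t) + (-2 * pexp p (fun ω => q ω * u ω)) * t) := by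
      simp only [pexp, sum_mul, mul_sum, ← sum_add_distrib]
      exact sum_congr rfl fun ω _ => by ring
    linarith [h t]
  have hdisc := discrim_le_zero hquad
  rw [discrim] at hdisc
  nlinarith

end Expectation

section Conditioning

variable {Ω 𝓧 : Type*} [Fintype Ω] {p : Ω → ℝ}

lemma pprob_pos_of_ne_zero (hp : ∀ ω, 0 ≤ p ω) {A : Ω → Prop} {ω : Ω} (hA : A ω)
    (hω : p ω ≠ 0) : 0 < pprob p A := by
  classical
  calc 0 < p ω := (hp ω).lt_of_ne' hω
    _ = if A ω then p ω else 0 := by rw [if_pos hA]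
    _ ≤ pprob p A :=
      single_le_sum (f := fun ω => if A ω then p ω else 0)
        (fun ω _ => by split_ifs <;> simp [hp ω]) (mem_univ ω)

open Classical in
lemma pprob_mul_eexp (hp : ∀ ω, 0 ≤ p ω) (A : Ω → Prop) (f : Ω → ℝ) :
    pprob p A * eexp p A f = ∑ ω, if A ω then p ω * f ω else 0 := by
  by_cases hA : pprob p A = 0
  · rw [hA, zero_mul, eq_comm]
    refine sum_eq_zero fun ω _ => ?_
    split_ifs with hAω
    · have hω : p ω = 0 := by_contra fun hω => (pprob_pos_of_ne_zero hp hAω hω).ne' hA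
      rw [hω, zero_mul]
    · rfl
  · exact mul_div_cancel₀ _ hA

lemma pexp_mul_condMean (hp : ∀ ω, 0 ≤ p ω) (X : Ω → 𝓧) (h : 𝓧 → ℝ) (f : Ω → ℝ) :
    pexp p (fun ω => h (X ω) * condMean p X f (X ω)) = pexp p (fun ω => h (X ω) * f ω) := by
  classical
  have hX : ∀ ω ∈ univ, X ω ∈ univ.image X := fun ω _ => mem_image_of_mem X (mem_univ ω)
  unfold pexp
  rw [← sum_fiberwise_of_maps_to hX, ← sum_fiberwise_of_maps_to hX]
  refine sum_congr rfl fun x _ => ?_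
  have hfiber : ∀ F : 𝓧 → Ω → ℝ, ∑ ω ∈ univ with X ω = x, p ω * F (X ω) ω =
      ∑ ω ∈ univ with X ω = x, p ω * F x ω :=
    fun F => sum_congr rfl fun ω hω => by rw [(mem_filter.mp hω).2]
  calc ∑ ω ∈ univ with X ω = x, p ω * (h (X ω) * condMean p X f (X ω))
      = h x * ((∑ ω ∈ univ with X ω = x, p ω) * condMean p X f x) := by
        rw [hfiber fun y _ => h y * condMean p X f y, sum_mul, mul_sum]
        exact sum_congr rfl fun ω _ => by ring
    _ = h x * ∑ ω, if X ω = x then p ω * f ω else 0 := by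
        rw [condMean, ← pprob_mul_eexp hp, pprob, sum_filter]
    _ = ∑ ω ∈ univ with X ω = x, p ω * (h (X ω) * f ω) := by
        rw [hfiber fun y ω => h y * f ω, sum_filter, mul_sum]
        exact sum_congr rfl fun ω _ => by split_ifs <;> ring

lemma pexp_mul_sub_condMean_eq_zero (hp : ∀ ω, 0 ≤ p ω) (X : Ω → 𝓧) (h : 𝓧 → ℝ)
    (f : Ω → ℝ) : pexp p (fun ω => h (X ω) * (f ω - condMean p X f (X ω))) = 0 := by
  simp only [mul_sub, pexp_sub, pexp_mul_condMean hp, sub_self]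

end Conditioning

section BinaryTreatment

variable {Ω 𝓧 : Type*} [Fintype Ω] {p : Ω → ℝ} {X : Ω → 𝓧} {T : Ω → ℝ}

lemma pprob_eq_add_of_binary (hT : ∀ ω, T ω = 0 ∨ T ω = 1) (x : 𝓧) :
    pprob p (fun ω => X ω = x) =
      pprob p (fun ω => X ω = x ∧ T ω = 1) + pprob p (fun ω => X ω = x ∧ T ω = 0) := by
  simp only [pprob, ← sum_add_distrib]
  refine sum_congr rfl fun ω _ => ?_
  rcases hT ω with h | h <;> by_cases hx : X ω = x <;> simp [hx, h]

lemma condMean_eq_of_binary (hT : ∀ ω, T ω = 0 ∨ T ω = 1) (x : 𝓧) :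
    condMean p X T x = pprob p (fun ω => X ω = x ∧ T ω = 1) / pprob p (fun ω => X ω = x) := by
  rw [condMean, eexp, pprob]
  congr 1
  refine sum_congr rfl fun ω _ => ?_
  rcases hT ω with h | h <;> by_cases hx : X ω = x <;> simp [hx, h]

lemma one_sub_condMean_eq_of_binary (hT : ∀ ω, T ω = 0 ∨ T ω = 1) {x : 𝓧}
    (hx : pprob p (fun ω => X ω = x) ≠ 0) :
    1 - condMean p X T x = pprob p (fun ω => X ω = x ∧ T ω = 0) / pprob p (fun ω => X ω = x) := by
  rw [condMean_eq_of_binary hT, eq_div_iff hx, sub_mul, div_mul_cancel₀ _ hx,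
    pprob_eq_add_of_binary hT x]
  ring

lemma condMean_mul_condMeanOn_one (hp : ∀ ω, 0 ≤ p ω) (hT : ∀ ω, T ω = 0 ∨ T ω = 1)
    (f : Ω → ℝ) (x : 𝓧) :
    condMean p X T x * condMeanOn p X T f x 1 = condMean p X (fun ω => T ω * f ω) x := by
  rw [condMean_eq_of_binary hT, div_mul_eq_mul_div, condMeanOn, pprob_mul_eexp hp, condMean, eexp]
  congr 1
  refine sum_congr rfl fun ω _ => ?_
  rcases hT ω with h | h <;> by_cases hx : X ω = x <;> simp [hx, h]

lemma one_sub_condMean_mul_condMeanOn_zero (hp : ∀ ω, 0 ≤ p ω) (hT : ∀ ω, T ω = 0 ∨ T ω = 1)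
    (f : Ω → ℝ) {x : 𝓧} (hx : pprob p (fun ω => X ω = x) ≠ 0) :
    (1 - condMean p X T x) * condMeanOn p X T f x 0 =
      condMean p X (fun ω => (1 - T ω) * f ω) x := by
  rw [one_sub_condMean_eq_of_binary hT hx, div_mul_eq_mul_div, condMeanOn, pprob_mul_eexp hp,
    condMean, eexp]
  congr 1
  refine sum_congr rfl fun ω _ => ?_
  rcases hT ω with h | h <;> by_cases hx : X ω = x <;> simp [hx, h]

lemma pexp_mul_sub_condMean_eq_cslope (hp : ∀ ω, 0 ≤ p ω) (hT : ∀ ω, T ω = 0 ∨ T ω = 1)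
    (f : Ω → ℝ) :
    pexp p (fun ω => f ω * (T ω - condMean p X T (X ω))) =
      pexp p (fun ω => condMean p X T (X ω) * (1 - condMean p X T (X ω)) *
        cslope p X T f (X ω)) := by
  calc pexp p (fun ω => f ω * (T ω - condMean p X T (X ω)))
      = pexp p (fun ω => (1 - condMean p X T (X ω)) * (T ω * f ω)) -
          pexp p (fun ω => condMean p X T (X ω) * ((1 - T ω) * f ω)) := by
        rw [← pexp_sub]; congr 1; funext ω; ring
    _ = pexp p (fun ω => (1 - condMean p X T (X ω)) *
            condMean p X (fun ω => T ω * f ω) (X ω)) -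
          pexp p (fun ω => condMean p X T (X ω) *
            condMean p X (fun ω => (1 - T ω) * f ω) (X ω)) := by
        rw [pexp_mul_condMean hp X (fun x => 1 - condMean p X T x),
          pexp_mul_condMean hp X (condMean p X T)]
    _ = _ := by
        rw [← pexp_sub]
        refine pexp_congr_of_ne_zero p fun ω hω => ?_
        have hx := (pprob_pos_of_ne_zero hp (A := fun ω' => X ω' = X ω) rfl hω).ne'
        rw [← condMean_mul_condMeanOn_one hp hT, ← one_sub_condMean_mul_condMeanOn_zero hp hT f hx,
          cslope]
        ring

lemma pexp_self_mul_sub_condMean (hp : ∀ ω, 0 ≤ p ω) (hT : ∀ ω, T ω = 0 ∨ T ω = 1) :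
    pexp p (fun ω => T ω * (T ω - condMean p X T (X ω))) =
      pexp p (fun ω => condMean p X T (X ω) * (1 - condMean p X T (X ω))) := by
  calc pexp p (fun ω => T ω * (T ω - condMean p X T (X ω)))
      = pexp p (fun ω => (1 - condMean p X T (X ω)) * T ω) := by
        congr 1; funext ω; rcases hT ω with h | h <;> simp [h]
    _ = _ := by
        rw [← pexp_mul_condMean hp X (fun x => 1 - condMean p X T x)]
        congr 1; funext ω; ring

end BinaryTreatment

/-- Angrist 1998: if binary `T` has `E[T | X] = X·α` linear in `X`,
then the coefficient `b` on `T` in the L² linear projection of `R` on `(T, X)`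
equals `E[Var[T|X] · ξ(X)] / E[Var[T|X]]`, where
`ξ(x) = E[R | T=1, X=x] - E[R | T=0, X=x]` and `Var[T|X] = E[T|X](1-E[T|X])`. -/
theorem stmt4 {Ω : Type*} [Fintype Ω] {k : ℕ} (p : Ω → ℝ) (hp : IsProb p)
    (X : Ω → Fin k → ℝ) (T R : Ω → ℝ) (hT : ∀ ω, T ω = 0 ∨ T ω = 1)
    (α : Fin k → ℝ)
    (hlin : ∀ x : Fin k → ℝ, 0 < pprob p (fun ω => X ω = x) →
      condMean p X T x = ∑ j, x j * α j)
    (hden : 0 < pexp p (fun ω => condMean p X T (X ω) * (1 - condMean p X T (X ω))))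
    (b : ℝ) (g : Fin k → ℝ)
    (hmin : ∀ (b' : ℝ) (g' : Fin k → ℝ),
      pexp p (fun ω => (R ω - T ω * b - ∑ j, X ω j * g j) ^ 2) ≤
        pexp p (fun ω => (R ω - T ω * b' - ∑ j, X ω j * g' j) ^ 2)) :
    b = pexp p (fun ω => condMean p X T (X ω) * (1 - condMean p X T (X ω)) *
            (condMeanOn p X T R (X ω) 1 - condMeanOn p X T R (X ω) 0)) /
        pexp p (fun ω => condMean p X T (X ω) * (1 - condMean p X T (X ω))) := by
  obtain ⟨hp0, -⟩ := hp
  set e : Ω → ℝ := fun ω => R ω - T ω * b - ∑ j, X ω j * g j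
  have he_T : pexp p (fun ω => e ω * T ω) = 0 :=
    pexp_mul_eq_zero_of_forall_le p fun t =>
      (hmin (b + t) g).trans_eq (by congr 1; funext ω; ring)
  have he_lin : pexp p (fun ω => e ω * ∑ j, X ω j * α j) = 0 :=
    pexp_mul_eq_zero_of_forall_le p fun t =>
      (hmin b (fun j => g j + t * α j)).trans_eq (by
        congr 1; funext ω
        simp only [mul_add, sum_add_distrib, mul_left_comm _ t, ← mul_sum]
        ring)
  have he_m : pexp p (fun ω => e ω * condMean p X T (X ω)) = 0 := by
    rw [← he_lin]
    refine pexp_congr_of_ne_zero p fun ω hω => ?_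
    rw [hlin _ (pprob_pos_of_ne_zero hp0 (A := fun ω' => X ω' = X ω) rfl hω)]
  have he_orth : pexp p (fun ω => e ω * (T ω - condMean p X T (X ω))) = 0 := by
    simp only [mul_sub, pexp_sub, he_T, he_m, sub_zero]
  have he_expand : pexp p (fun ω => e ω * (T ω - condMean p X T (X ω))) =
      pexp p (fun ω => R ω * (T ω - condMean p X T (X ω))) -
        b * pexp p (fun ω => T ω * (T ω - condMean p X T (X ω))) -
        pexp p (fun ω => (∑ j, X ω j * g j) * (T ω - condMean p X T (X ω))) := by
    rw [← pexp_const_mul, ← pexp_sub, ← pexp_sub]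
    congr 1; funext ω; ring
  rw [pexp_mul_sub_condMean_eq_cslope hp0 hT R, pexp_self_mul_sub_condMean hp0 hT,
    pexp_mul_sub_condMean_eq_zero hp0 X (fun x => ∑ j, x j * g j)] at he_expand
  rw [eq_div_iff hden.ne']
  simp only [cslope] at he_expand
  linarith
end

section
/- Under conditional independence of potential outcomes and potential treatments from Z given X, the exclusion restriction, relevance, and weak monotonicity (compliers-only on one subset of covariate values, defiers-only on its complement), the conditional proportion of individuals with D(1) ≠ D(0) satisfies π(x) = |ω(x)| = c(x)·ω(x), where ω(x) = E[D | Z=1, X=x] − E[D | Z=0, X=x] and c(x) = sgn(Pr[D(1)≥D(0) | X=x] − Pr[D(1)≤D(0) | X=x]). -/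
open Finset

/-! By conditional independence, `E[D | Z = z, X = x] = Pr[D(z) = 1 | X = x]`, so
`ω(x) = Pr[D(1) = 1 | X = x] - Pr[D(0) = 1 | X = x] = (C - F) / Pr[X = x]`, where `C` and `F` are
the masses of compliers (`D(0) < D(1)`) and defiers (`D(1) < D(0)`) in the stratum `X = x`.
For binary treatments `C - F` is also `Pr[D(0) ≤ D(1)] - Pr[D(1) ≤ D(0)]`, while
`π(x) = (C + F) / Pr[X = x]`. Weak monotonicity kills one of `C`, `F`, so `C + F = |C - F|`,
and `c(x) · ω(x) = sgn(ω(x)) · ω(x) = |ω(x)|`. -/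

section Pprob

variable {Ω : Type*} [Fintype Ω] {p : Ω → ℝ}

lemma pprob_congr {A B : Ω → Prop} (h : ∀ ω, A ω ↔ B ω) : pprob p A = pprob p B := by
  rw [funext fun ω => propext (h ω)]

lemma pprob_nonneg (hp : ∀ ω, 0 ≤ p ω) (A : Ω → Prop) : 0 ≤ pprob p A := by
  classical
  exact Finset.sum_nonneg fun ω _ => by split_ifs <;> simp [hp ω]

lemma pprob_eq_zero (hp : ∀ ω, 0 ≤ p ω) {A : Ω → Prop} (h : ∀ ω, 0 < p ω → ¬ A ω) :
    pprob p A = 0 := by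
  classical
  refine Finset.sum_eq_zero fun ω _ => ?_
  split_ifs with hA
  · by_contra hne
    exact h ω ((hp ω).lt_of_ne' hne) hA
  · rfl

open Classical in
lemma pprob_add_pprob_eq {A B C D : Ω → Prop}
    (h : ∀ ω, ((if A ω then 1 else 0 : ℝ) + if B ω then 1 else 0) =
      (if C ω then 1 else 0 : ℝ) + if D ω then 1 else 0) :
    pprob p A + pprob p B = pprob p C + pprob p D := by
  simp only [pprob, ← Finset.sum_add_distrib]
  refine Finset.sum_congr rfl fun ω _ => ?_
  have hω := h ω
  split_ifs at hω ⊢ <;> linarith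

open Classical in
lemma pprob_add_pprob_eq_pprob {A B C : Ω → Prop}
    (h : ∀ ω, ((if A ω then 1 else 0 : ℝ) + if B ω then 1 else 0) = if C ω then 1 else 0) :
    pprob p A + pprob p B = pprob p C := by
  simpa [pprob] using pprob_add_pprob_eq (p := p) (D := fun _ => False) (by simpa using h)

lemma pprob_and_add_pprob_not_and (A B : Ω → Prop) :
    pprob p (fun ω => A ω ∧ B ω) + pprob p (fun ω => ¬ A ω ∧ B ω) = pprob p B :=
  pprob_add_pprob_eq_pprob fun ω => by by_cases A ω <;> by_cases B ω <;> simp [*]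

open Classical in
lemma pprob_comp_and_eq_sum {α : Type*} (U : Ω → α) (Q : α → Prop) (A : Ω → Prop) :
    pprob p (fun ω => Q (U ω) ∧ A ω) =
      ∑ u ∈ (Finset.univ.image U).filter Q, pprob p (fun ω => U ω = u ∧ A ω) := by
  simp only [pprob]
  rw [Finset.sum_comm]
  refine Finset.sum_congr rfl fun ω _ => ?_
  by_cases hA : A ω <;> simp [hA]

end Pprob

section CondIndep

variable {Ω α β : Type*} [Fintype Ω] {p : Ω → ℝ}

def CondIndepOn (p : Ω → ℝ) (B : Ω → Prop) (U : Ω → α) (Z : Ω → β) : Prop :=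
  ∀ u z, pprob p (fun ω => U ω = u ∧ Z ω = z ∧ B ω) * pprob p B =
    pprob p (fun ω => U ω = u ∧ B ω) * pprob p (fun ω => Z ω = z ∧ B ω)

variable {B : Ω → Prop} {U : Ω → α} {Z : Ω → β}

lemma CondIndepOn.pprob_mul (h : CondIndepOn p B U Z) (Q : α → Prop) (z : β) :
    pprob p (fun ω => Q (U ω) ∧ Z ω = z ∧ B ω) * pprob p B =
      pprob p (fun ω => Q (U ω) ∧ B ω) * pprob p (fun ω => Z ω = z ∧ B ω) := by
  classical
  rw [pprob_comp_and_eq_sum U Q, pprob_comp_and_eq_sum U Q, Finset.sum_mul, Finset.sum_mul]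
  exact Finset.sum_congr rfl fun u _ => h u z

lemma CondIndepOn.cprob_eq (h : CondIndepOn p B U Z) (Q : α → Prop) {z : β}
    (hB : pprob p B ≠ 0) (hz : pprob p (fun ω => Z ω = z ∧ B ω) ≠ 0) :
    cprob p (fun ω => Q (U ω)) (fun ω => Z ω = z ∧ B ω) = cprob p (fun ω => Q (U ω)) B := by
  rw [cprob, cprob, div_eq_div_iff hz hB, h.pprob_mul Q z]

lemma condIndepOn_prod {D0 D1 : Ω → α}
    (h : ∀ d0 d1 z, pprob p (fun ω => B ω ∧ D0 ω = d0 ∧ D1 ω = d1 ∧ Z ω = z) * pprob p B =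
      pprob p (fun ω => B ω ∧ D0 ω = d0 ∧ D1 ω = d1) * pprob p (fun ω => B ω ∧ Z ω = z)) :
    CondIndepOn p B (fun ω => (D0 ω, D1 ω)) Z := by
  rintro ⟨d0, d1⟩ z
  convert h d0 d1 z using 2 <;> exact pprob_congr fun ω => by
    simp only [Prod.mk.injEq, and_comm, and_left_comm, and_assoc]

end CondIndep

section Conditioning

variable {Ω : Type*} [Fintype Ω] {p : Ω → ℝ} {A B : Ω → Prop}

lemma pprob_and_ne_zero_of_cprob_pos (h : 0 < cprob p A B) :
    pprob p (fun ω => A ω ∧ B ω) ≠ 0 := by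
  intro h0
  simp [cprob, h0] at h

lemma pprob_not_and_ne_zero_of_cprob_lt_one (hB : 0 < pprob p B) (h : cprob p A B < 1) :
    pprob p (fun ω => ¬ A ω ∧ B ω) ≠ 0 := by
  have hsplit := pprob_and_add_pprob_not_and (p := p) A B
  rw [cprob, div_lt_one hB] at h
  linarith

lemma eexp_eq_cprob {f : Ω → ℝ} (hf : ∀ ω, f ω = 0 ∨ f ω = 1) :
    eexp p A f = cprob p (fun ω => f ω = 1) A := by
  classical
  simp only [eexp, cprob, pprob]
  congr 1
  refine Finset.sum_congr rfl fun ω _ => ?_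
  by_cases hA : A ω <;> rcases hf ω with h | h <;> simp [hA, h]

end Conditioning

lemma CondIndepOn.condMeanOn_eq_cprob {Ω 𝓧 α : Type*} [Fintype Ω] {p : Ω → ℝ} {X : Ω → 𝓧}
    {x : 𝓧} {Z : Ω → ℝ} {U : Ω → α} (h : CondIndepOn p (fun ω => X ω = x) U Z)
    {f : Ω → ℝ} (hf : ∀ ω, f ω = 0 ∨ f ω = 1) {G : α → ℝ} {z : ℝ}
    (hfG : ∀ ω, Z ω = z → f ω = G (U ω)) (hx : pprob p (fun ω => X ω = x) ≠ 0)
    (hz : pprob p (fun ω => Z ω = z ∧ X ω = x) ≠ 0) :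
    condMeanOn p X Z f x z = cprob p (fun ω => G (U ω) = 1) (fun ω => X ω = x) := by
  rw [condMeanOn, eexp_eq_cprob hf, ← h.cprob_eq (fun u => G u = 1) hx hz, cprob, cprob]
  congr 1 <;> refine pprob_congr fun ω => ?_
  · constructor
    · rintro ⟨hf1, hX, hZ⟩
      exact ⟨hfG ω hZ ▸ hf1, hZ, hX⟩
    · rintro ⟨hG1, hZ, hX⟩
      exact ⟨(hfG ω hZ).symm ▸ hG1, hX, hZ⟩
  · exact and_comm

section BinaryTreatments

variable {Ω : Type*} [Fintype Ω] {p : Ω → ℝ} {D0 D1 : Ω → ℝ}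

lemma pprob_one_sub_pprob_one_eq (hD0 : ∀ ω, D0 ω = 0 ∨ D0 ω = 1) (hD1 : ∀ ω, D1 ω = 0 ∨ D1 ω = 1)
    (B : Ω → Prop) :
    pprob p (fun ω => D1 ω = 1 ∧ B ω) - pprob p (fun ω => D0 ω = 1 ∧ B ω) =
      pprob p (fun ω => D0 ω < D1 ω ∧ B ω) - pprob p (fun ω => D1 ω < D0 ω ∧ B ω) := by
  have h := pprob_add_pprob_eq (p := p) (A := fun ω => D1 ω = 1 ∧ B ω)
    (B := fun ω => D1 ω < D0 ω ∧ B ω) (C := fun ω => D0 ω = 1 ∧ B ω)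
    (D := fun ω => D0 ω < D1 ω ∧ B ω) fun ω => by
      by_cases hB : B ω <;> rcases hD0 ω with h0 | h0 <;> rcases hD1 ω with h1 | h1 <;>
        norm_num [hB, h0, h1]
  linarith

lemma pprob_ne_eq_add (hD0 : ∀ ω, D0 ω = 0 ∨ D0 ω = 1) (hD1 : ∀ ω, D1 ω = 0 ∨ D1 ω = 1)
    (B : Ω → Prop) :
    pprob p (fun ω => D1 ω ≠ D0 ω ∧ B ω) =
      pprob p (fun ω => D0 ω < D1 ω ∧ B ω) + pprob p (fun ω => D1 ω < D0 ω ∧ B ω) :=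
  (pprob_add_pprob_eq_pprob fun ω => by
    by_cases hB : B ω <;> rcases hD0 ω with h0 | h0 <;> rcases hD1 ω with h1 | h1 <;>
      norm_num [hB, h0, h1]).symm

lemma pprob_le_sub_pprob_le_eq (hD0 : ∀ ω, D0 ω = 0 ∨ D0 ω = 1) (hD1 : ∀ ω, D1 ω = 0 ∨ D1 ω = 1)
    (B : Ω → Prop) :
    pprob p (fun ω => D0 ω ≤ D1 ω ∧ B ω) - pprob p (fun ω => D1 ω ≤ D0 ω ∧ B ω) =
      pprob p (fun ω => D0 ω < D1 ω ∧ B ω) - pprob p (fun ω => D1 ω < D0 ω ∧ B ω) := by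
  have h := pprob_add_pprob_eq (p := p) (A := fun ω => D0 ω ≤ D1 ω ∧ B ω)
    (B := fun ω => D1 ω < D0 ω ∧ B ω) (C := fun ω => D1 ω ≤ D0 ω ∧ B ω)
    (D := fun ω => D0 ω < D1 ω ∧ B ω) fun ω => by
      by_cases hB : B ω <;> rcases hD0 ω with h0 | h0 <;> rcases hD1 ω with h1 | h1 <;>
        norm_num [hB, h0, h1]
  linarith

end BinaryTreatments

lemma abs_pprob_lt_sub_pprob_gt {Ω : Type*} [Fintype Ω] {p : Ω → ℝ} (hp : ∀ ω, 0 ≤ p ω)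
    {D0 D1 : Ω → ℝ} {B : Ω → Prop}
    (hmono : (∀ ω, 0 < p ω → B ω → D0 ω ≤ D1 ω) ∨ (∀ ω, 0 < p ω → B ω → D1 ω ≤ D0 ω)) :
    |pprob p (fun ω => D0 ω < D1 ω ∧ B ω) - pprob p (fun ω => D1 ω < D0 ω ∧ B ω)| =
      pprob p (fun ω => D0 ω < D1 ω ∧ B ω) + pprob p (fun ω => D1 ω < D0 ω ∧ B ω) := by
  rcases hmono with hm | hm
  · rw [pprob_eq_zero (A := fun ω => D1 ω < D0 ω ∧ B ω) hp fun ω hω h => (hm ω hω h.2).not_gt h.1,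
      sub_zero, add_zero,
      abs_of_nonneg (pprob_nonneg hp _)]
  · rw [pprob_eq_zero hp fun ω hω h => (hm ω hω h.2).not_gt h.1, zero_sub, abs_neg, zero_add,
      abs_of_nonneg (pprob_nonneg hp _)]

lemma Real.sign_mul_self (a : ℝ) : Real.sign a * a = |a| := by
  rcases lt_trichotomy a 0 with h | rfl | h
  · rw [Real.sign_of_neg h, abs_of_neg h, neg_one_mul]
  · simp
  · rw [Real.sign_of_pos h, abs_of_pos h, one_mul]

/-- Lemma 1(ii), first-stage part: under conditional independence
of `(D(0),D(1))` and `Z` given `X`, relevance, and weak monotonicity,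
`π(x) = |ω(x)| = c(x)·ω(x)` at every covariate value of positive probability. -/
theorem stmt6 {Ω 𝓧 : Type*} [Fintype Ω] (p : Ω → ℝ) (hp : IsProb p)
    (X : Ω → 𝓧) (Z D0 D1 : Ω → ℝ)
    (hZ : ∀ ω, Z ω = 0 ∨ Z ω = 1)
    (hD0 : ∀ ω, D0 ω = 0 ∨ D0 ω = 1) (hD1 : ∀ ω, D1 ω = 0 ∨ D1 ω = 1)
    -- conditional independence: (D0, D1) ⫫ Z | X
    (hindep : ∀ (x : 𝓧) (d0 d1 z : ℝ),
      pprob p (fun ω => X ω = x ∧ D0 ω = d0 ∧ D1 ω = d1 ∧ Z ω = z) *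
          pprob p (fun ω => X ω = x)
        = pprob p (fun ω => X ω = x ∧ D0 ω = d0 ∧ D1 ω = d1) *
            pprob p (fun ω => X ω = x ∧ Z ω = z))
    -- relevance
    (hrel : ∀ x : 𝓧, 0 < pprob p (fun ω => X ω = x) →
      0 < cprob p (fun ω => Z ω = 1) (fun ω => X ω = x) ∧
      cprob p (fun ω => Z ω = 1) (fun ω => X ω = x) < 1 ∧
      cprob p (fun ω => D1 ω = 1) (fun ω => X ω = x) ≠
        cprob p (fun ω => D0 ω = 1) (fun ω => X ω = x))
    -- weak monotonicity
    (hmono : ∀ x : 𝓧,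
      (∀ ω, 0 < p ω → X ω = x → D0 ω ≤ D1 ω) ∨
      (∀ ω, 0 < p ω → X ω = x → D1 ω ≤ D0 ω)) :
    ∀ x : 𝓧, 0 < pprob p (fun ω => X ω = x) →
      cprob p (fun ω => D1 ω ≠ D0 ω) (fun ω => X ω = x)
          = |cslope p X Z (fun ω => if Z ω = 1 then D1 ω else D0 ω) x| ∧
      cprob p (fun ω => D1 ω ≠ D0 ω) (fun ω => X ω = x)
          = Real.sign (cprob p (fun ω => D0 ω ≤ D1 ω) (fun ω => X ω = x) -
                cprob p (fun ω => D1 ω ≤ D0 ω) (fun ω => X ω = x)) *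
              cslope p X Z (fun ω => if Z ω = 1 then D1 ω else D0 ω) x := by
  intro x hx
  obtain ⟨hZ1_pos, hZ1_lt_one, -⟩ := hrel x hx
  have hind := condIndepOn_prod (hindep x)
  have hP1 : pprob p (fun ω => Z ω = 1 ∧ X ω = x) ≠ 0 := pprob_and_ne_zero_of_cprob_pos hZ1_pos
  have hP0 : pprob p (fun ω => Z ω = 0 ∧ X ω = x) ≠ 0 := by
    have hZ0 : ∀ ω, ¬ Z ω = 1 ↔ Z ω = 0 := fun ω => by rcases hZ ω with h | h <;> norm_num [h]
    simpa only [hZ0] using pprob_not_and_ne_zero_of_cprob_lt_one hx hZ1_lt_one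
  set S := pprob p (fun ω => X ω = x)
  set C := pprob p (fun ω => D0 ω < D1 ω ∧ X ω = x)
  set F := pprob p (fun ω => D1 ω < D0 ω ∧ X ω = x)
  have hD : ∀ ω, (if Z ω = 1 then D1 ω else D0 ω) = 0 ∨ (if Z ω = 1 then D1 ω else D0 ω) = 1 :=
    fun ω => by split_ifs; exacts [hD1 ω, hD0 ω]
  have hslope : cslope p X Z (fun ω => if Z ω = 1 then D1 ω else D0 ω) x = (C - F) / S := by
    rw [cslope, hind.condMeanOn_eq_cprob hD (G := Prod.snd) (fun ω hz => if_pos hz) hx.ne' hP1,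
      hind.condMeanOn_eq_cprob hD (G := Prod.fst) (fun ω hz => if_neg (by norm_num [hz]))
        hx.ne' hP0, cprob, cprob, ← sub_div, pprob_one_sub_pprob_one_eq hD0 hD1]
  have hπ : cprob p (fun ω => D1 ω ≠ D0 ω) (fun ω => X ω = x) =
      |cslope p X Z (fun ω => if Z ω = 1 then D1 ω else D0 ω) x| := by
    rw [hslope, abs_div, abs_of_pos hx, abs_pprob_lt_sub_pprob_gt hp.1 (hmono x), cprob,
      pprob_ne_eq_add hD0 hD1]
  have hc : cprob p (fun ω => D0 ω ≤ D1 ω) (fun ω => X ω = x) -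
      cprob p (fun ω => D1 ω ≤ D0 ω) (fun ω => X ω = x) =
      cslope p X Z (fun ω => if Z ω = 1 then D1 ω else D0 ω) x := by
    rw [cprob, cprob, ← sub_div, pprob_le_sub_pprob_le_eq hD0 hD1, hslope]
  exact ⟨hπ, by rw [hc, Real.sign_mul_self, hπ]⟩
end
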